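/- For a uniform noise and positive gbAR(p) model, the min-entropy per bit of the process equals -log(1 - β/2), and it equals the common limit of the average min-entropy per bit and worst-case min-entropy per bit of blocks as the block length tends to infinity. -/
import Mathlib


open Real Filter

/-- Maximum of a real-valued function on a finite nonempty type. -/
noncomputable def fmax {α : Type*} [Fintype α] [Nonempty α] (f : α → ℝ) : ℝ :=
  Finset.univ.sup' Finset.univ_nonempty f

/-- Transition probability of a uniform noise positive gbAR(p) model. -/
noncomputable def gbT (p : ℕ) (α : Fin p → ℝ) (β : ℝ)
    (h : Fin p → Bool) (x : Bool) : ℝ :=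
  (∑ i : Fin p, α i * (if x = h i then 1 else 0)) + β / 2

/-- Conditional probability of a block of length `n+1` given a length-`p`
history (chronological order), via the Markov factorization. -/
noncomputable def gbBlockCond (p n : ℕ) (α : Fin p → ℝ) (β : ℝ)
    (pre : Fin p → Bool) (b : Fin (n + 1) → Bool) : ℝ :=
  ∏ i : Fin (n + 1), gbT p α β (fun j : Fin p =>
    Fin.append pre b ⟨i.1 + j.1, by have := i.isLt; have := j.isLt; omega⟩) (b i)

section Aux

lemma fmax_le {α : Type*} [Fintype α] [Nonempty α] {f : α → ℝ} {M : ℝ}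
    (h : ∀ a, f a ≤ M) : fmax f ≤ M :=
  Finset.sup'_le _ _ (fun a _ => h a)

lemma le_fmax {α : Type*} [Fintype α] [Nonempty α] (f : α → ℝ) (a : α) :
    f a ≤ fmax f :=
  Finset.le_sup' f (Finset.mem_univ a)

variable {p : ℕ} {α : Fin p → ℝ} {β : ℝ}

lemma gbT_ge (hα : ∀ i, 0 ≤ α i) (h : Fin p → Bool) (x : Bool) :
    β / 2 ≤ gbT p α β h x := by
  unfold gbT
  have : 0 ≤ ∑ i : Fin p, α i * (if x = h i then 1 else 0) :=
    Finset.sum_nonneg fun i _ => mul_nonneg (hα i) (by positivity)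
  linarith

lemma gbT_le (hα : ∀ i, 0 ≤ α i) (hsum : (∑ i, α i) + β = 1)
    (h : Fin p → Bool) (x : Bool) :
    gbT p α β h x ≤ 1 - β / 2 := by
  unfold gbT
  have : (∑ i : Fin p, α i * (if x = h i then 1 else 0)) ≤ ∑ i, α i :=
    Finset.sum_le_sum fun i _ => by
      have := hα i; split
      · simp
      · simp; linarith
  linarith

lemma gbT_allmatch (hsum : (∑ i, α i) + β = 1)
    {h : Fin p → Bool} {x : Bool} (hm : ∀ i, h i = x) :
    gbT p α β h x = 1 - β / 2 := by
  unfold gbT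
  have : (∑ i : Fin p, α i * (if x = h i then 1 else 0)) = ∑ i, α i := by
    apply Finset.sum_congr rfl
    intro i _
    rw [hm i, if_pos rfl, mul_one]
  rw [this]; linarith

lemma gbBlock_pos (hβ : 0 < β) (hα : ∀ i, 0 ≤ α i) (n : ℕ)
    (pre : Fin p → Bool) (b : Fin (n + 1) → Bool) :
    0 < gbBlockCond p n α β pre b := by
  apply Finset.prod_pos
  intro i _
  exact lt_of_lt_of_le (by linarith) (gbT_ge hα _ _)

lemma gbBlock_le (hβ : 0 < β) (hα : ∀ i, 0 ≤ α i) (hsum : (∑ i, α i) + β = 1)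
    (n : ℕ) (pre : Fin p → Bool) (b : Fin (n + 1) → Bool) :
    gbBlockCond p n α β pre b ≤ (1 - β / 2) ^ (n + 1) := by
  have := Finset.prod_le_prod (s := (Finset.univ : Finset (Fin (n+1))))
    (f := fun i => gbT p α β (fun j : Fin p =>
      Fin.append pre b ⟨i.1 + j.1, by have := i.isLt; have := j.isLt; omega⟩) (b i))
    (g := fun _ => 1 - β / 2)
    (fun i _ => le_trans (by linarith) (gbT_ge hα _ _))
    (fun i _ => gbT_le hα hsum _ _)
  calc gbBlockCond p n α β pre b ≤ ∏ _i : Fin (n+1), (1 - β/2) := this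
    _ = (1 - β / 2) ^ (n + 1) := by
        rw [Finset.prod_const, Finset.card_univ, Fintype.card_fin]

/-- Lower bound for the all-true block given any history. -/
lemma gbBlock_lower (hp : 0 < p) (hβ : 0 < β ∧ β ≤ 1) (hα : ∀ i, 0 ≤ α i)
    (hsum : (∑ i, α i) + β = 1) (n : ℕ) (pre : Fin p → Bool) :
    (β / 2 / (1 - β / 2)) ^ p * (1 - β / 2) ^ (n + 1)
      ≤ gbBlockCond p n α β pre (fun _ => true) := by
  obtain ⟨hβ0, hβ1⟩ := hβ
  set M : ℝ := 1 - β / 2 with hM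
  have hM0 : 0 < M := by rw [hM]; linarith
  set r : ℝ := β / 2 / M with hr
  have hr0 : 0 < r := by positivity
  have hr1 : r ≤ 1 := by
    rw [hr, div_le_one hM0, hM]; linarith
  -- pointwise lower bounds on the factors
  have key : ∀ i : Fin (n + 1),
      (if i.1 < p then r else 1) * M ≤ gbT p α β (fun j : Fin p =>
        Fin.append pre (fun _ : Fin (n+1) => true)
          ⟨i.1 + j.1, by have := i.isLt; have := j.isLt; omega⟩)
        ((fun _ : Fin (n+1) => true) i) := by
    intro i
    by_cases hip : i.1 < p
    · rw [if_pos hip]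
      have : r * M = β / 2 := by
        rw [hr, div_mul_cancel₀ _ hM0.ne']
      rw [this]
      exact gbT_ge hα _ _
    · rw [if_neg hip, one_mul]
      rw [gbT_allmatch hsum]
      intro j
      have hge : p ≤ i.1 + j.1 := by omega
      have hlt : i.1 + j.1 - p < n + 1 := by have := i.isLt; have := j.isLt; omega
      have heq : (⟨i.1 + j.1, by have := i.isLt; have := j.isLt; omega⟩ :
          Fin (p + (n+1))) = Fin.natAdd p ⟨i.1 + j.1 - p, hlt⟩ := by
        apply Fin.ext; simp [Fin.natAdd]; omega
      rw [heq, Fin.append_right]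
  have hprod : ∏ i : Fin (n+1), ((if i.1 < p then r else 1) * M)
      ≤ gbBlockCond p n α β pre (fun _ => true) :=
    Finset.prod_le_prod (fun i _ => by positivity) (fun i _ => key i)
  refine le_trans ?_ hprod
  rw [Finset.prod_mul_distrib, Finset.prod_const, Finset.card_univ, Fintype.card_fin,
    Finset.prod_ite (fun _ => r) (fun _ => (1:ℝ)), Finset.prod_const, Finset.prod_const,
    one_pow, mul_one]
  have hcard : (Finset.univ.filter (fun i : Fin (n+1) => i.1 < p)).card ≤ p := by
    have := Finset.card_le_card_of_injOn
      (s := Finset.univ.filter (fun i : Fin (n+1) => i.1 < p))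
      (t := (Finset.univ : Finset (Fin p)))
      (fun i => (⟨i.1 % p, Nat.mod_lt _ hp⟩ : Fin p))
      (fun a _ => Finset.mem_univ _)
      (by
        intro a ha b hb hab
        simp only [Finset.coe_filter, Set.mem_setOf_eq] at ha hb
        apply Fin.ext
        have h1 : a.1 % p = a.1 := Nat.mod_eq_of_lt ha.2
        have h2 : b.1 % p = b.1 := Nat.mod_eq_of_lt hb.2
        have := congrArg Fin.val hab
        simpa [h1, h2] using this)
    simpa using this
  have : r ^ p ≤ r ^ (Finset.univ.filter (fun i : Fin (n+1) => i.1 < p)).card :=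
    pow_le_pow_of_le_one hr0.le hr1 hcard
  have hMpow : (0:ℝ) ≤ M ^ (n+1) := by positivity
  calc r ^ p * M ^ (n+1) ≤ r ^ (Finset.univ.filter (fun i : Fin (n+1) => i.1 < p)).card
        * M ^ (n+1) := by
        exact mul_le_mul_of_nonneg_right this hMpow
    _ = _ := by ring

/-- The squeeze lemma for per-bit log limits. -/
lemma squeeze_logb (M K : ℝ) (hM : 0 < M) (hK : 0 < K) (A : ℕ → ℝ)
    (hlb : ∀ n, K * M ^ (n + 1) ≤ A n) (hub : ∀ n, A n ≤ M ^ (n + 1)) :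
    Tendsto (fun n : ℕ => -(1 / ((n : ℝ) + 1)) * Real.logb 2 (A n))
      atTop (nhds (-Real.logb 2 M)) := by
  set L : ℝ := Real.logb 2 M with hL
  set C : ℝ := Real.logb 2 K with hC
  have hApos : ∀ n, 0 < A n := fun n =>
    lt_of_lt_of_le (by positivity) (hlb n)
  have hBl : ∀ n : ℕ, ((n : ℝ) + 1) * L + C ≤ Real.logb 2 (A n) := by
    intro n
    have h1 : Real.logb 2 (K * M ^ (n+1)) ≤ Real.logb 2 (A n) :=
      (Real.logb_le_logb (by norm_num) (by positivity) (hApos n)).2 (hlb n)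
    rw [Real.logb_mul hK.ne' (by positivity), Real.logb_pow] at h1
    push_cast at h1
    linarith
  have hBu : ∀ n : ℕ, Real.logb 2 (A n) ≤ ((n : ℝ) + 1) * L := by
    intro n
    have h1 : Real.logb 2 (A n) ≤ Real.logb 2 (M ^ (n+1)) :=
      (Real.logb_le_logb (by norm_num) (hApos n) (by positivity)).2 (hub n)
    rw [Real.logb_pow] at h1
    push_cast at h1
    linarith
  have hlo : Tendsto (fun n : ℕ => -L - |C| * (1 / ((n : ℝ) + 1)))
      atTop (nhds (-L)) := by
    have := (tendsto_const_nhds (x := |C|) (f := atTop (α := ℕ))).mul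
      tendsto_one_div_add_atTop_nhds_zero_nat
    have h2 := (tendsto_const_nhds (x := -L) (f := atTop (α := ℕ))).sub this
    simpa using h2
  have hhi : Tendsto (fun n : ℕ => -L + |C| * (1 / ((n : ℝ) + 1)))
      atTop (nhds (-L)) := by
    have := (tendsto_const_nhds (x := |C|) (f := atTop (α := ℕ))).mul
      tendsto_one_div_add_atTop_nhds_zero_nat
    have h2 := (tendsto_const_nhds (x := -L) (f := atTop (α := ℕ))).add this
    simpa using h2
  apply tendsto_of_tendsto_of_tendsto_of_le_of_le hlo hhi
  · -- lower bound
    intro n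
    have hn1 : (0:ℝ) < (n : ℝ) + 1 := by positivity
    set t : ℝ := 1 / ((n : ℝ) + 1) with ht
    have ht0 : 0 < t := by positivity
    have htn : t * ((n : ℝ) + 1) = 1 := one_div_mul_cancel hn1.ne'
    have h1 : t * Real.logb 2 (A n) ≤ t * (((n : ℝ) + 1) * L) :=
      mul_le_mul_of_nonneg_left (hBu n) ht0.le
    have h2 : t * (((n : ℝ) + 1) * L) = L := by
      rw [← mul_assoc, htn, one_mul]
    have h3 : 0 ≤ |C| * t := by positivity
    simp only []
    nlinarith [h1, h2, h3]
  · -- upper bound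
    intro n
    have hn1 : (0:ℝ) < (n : ℝ) + 1 := by positivity
    set t : ℝ := 1 / ((n : ℝ) + 1) with ht
    have ht0 : 0 < t := by positivity
    have htn : t * ((n : ℝ) + 1) = 1 := one_div_mul_cancel hn1.ne'
    have h1 : t * (((n : ℝ) + 1) * L + C) ≤ t * Real.logb 2 (A n) :=
      mul_le_mul_of_nonneg_left (hBl n) ht0.le
    have h2 : t * (((n : ℝ) + 1) * L + C) = L + t * C := by
      rw [mul_add, ← mul_assoc, htn, one_mul]
    have h3 : t * (-|C|) ≤ t * C :=
      mul_le_mul_of_nonneg_left (neg_abs_le C) ht0.le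
    nlinarith [h1, h2, h3]

end Aux

/-- for a uniform noise and positive gbAR(p) model (with history
distribution `μ`), the min-entropy per bit of the process equals
`-log₂(1 - β/2)`, and it is the common limit, as the block length tends to
infinity, of the per-bit min-entropy of joint blocks, the average min-entropy
per bit of blocks, and the worst-case min-entropy per bit of blocks. -/
theorem gbar_minEntropy_perBit_limits (p : ℕ) (hp : 0 < p)
    (α : Fin p → ℝ) (β : ℝ)
    (hα : ∀ i, 0 ≤ α i) (hβ : 0 < β ∧ β ≤ 1)
    (hsum : (∑ i, α i) + β = 1)
    (μ : (Fin p → Bool) → ℝ)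
    (hμ0 : ∀ h, 0 ≤ μ h) (hμ1 : ∑ h, μ h = 1) :
    Tendsto (fun n : ℕ => -(1 / ((n : ℝ) + 1)) * Real.logb 2
        (fmax (fun b : Fin (n + 1) → Bool =>
          ∑ h, μ h * gbBlockCond p n α β h b)))
      atTop (nhds (-Real.logb 2 (1 - β / 2))) ∧
    Tendsto (fun n : ℕ => -(1 / ((n : ℝ) + 1)) * Real.logb 2
        (∑ h, μ h * fmax (gbBlockCond p n α β h)))
      atTop (nhds (-Real.logb 2 (1 - β / 2))) ∧
    Tendsto (fun n : ℕ => -(1 / ((n : ℝ) + 1)) * Real.logb 2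
        (fmax (fun hb : (Fin p → Bool) × (Fin (n + 1) → Bool) =>
          gbBlockCond p n α β hb.1 hb.2)))
      atTop (nhds (-Real.logb 2 (1 - β / 2))) := by
  obtain ⟨hβ0, hβ1⟩ := hβ
  set M : ℝ := 1 - β / 2 with hMdef
  have hM0 : 0 < M := by rw [hMdef]; linarith
  set K : ℝ := (β / 2 / M) ^ p with hKdef
  have hK0 : 0 < K := by positivity
  have hKle : K ≤ 1 := by
    apply pow_le_one₀ (by positivity)
    rw [div_le_one hM0, hMdef]; linarith
  -- common bounds
  have hub : ∀ n (pre : Fin p → Bool) (b : Fin (n+1) → Bool),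
      gbBlockCond p n α β pre b ≤ M ^ (n+1) := fun n pre b =>
    gbBlock_le hβ0 hα hsum n pre b
  have hlbtrue : ∀ n (pre : Fin p → Bool),
      K * M ^ (n+1) ≤ gbBlockCond p n α β pre (fun _ => true) := fun n pre =>
    gbBlock_lower hp ⟨hβ0, hβ1⟩ hα hsum n pre
  refine ⟨?_, ?_, ?_⟩
  · -- joint blocks (mixture over histories)
    apply squeeze_logb M K hM0 hK0
    · intro n
      refine le_trans ?_ (le_fmax _ (fun _ => true))
      calc K * M ^ (n+1) = ∑ h, μ h * (K * M ^ (n+1)) := by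
            rw [← Finset.sum_mul, hμ1, one_mul]
        _ ≤ ∑ h, μ h * gbBlockCond p n α β h (fun _ => true) :=
            Finset.sum_le_sum fun h _ =>
              mul_le_mul_of_nonneg_left (hlbtrue n h) (hμ0 h)
    · intro n
      apply fmax_le
      intro b
      calc (∑ h, μ h * gbBlockCond p n α β h b)
          ≤ ∑ h, μ h * M ^ (n+1) :=
            Finset.sum_le_sum fun h _ =>
              mul_le_mul_of_nonneg_left (hub n h b) (hμ0 h)
        _ = M ^ (n+1) := by rw [← Finset.sum_mul, hμ1, one_mul]
  · -- average min-entropy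
    apply squeeze_logb M K hM0 hK0
    · intro n
      calc K * M ^ (n+1) = ∑ h, μ h * (K * M ^ (n+1)) := by
            rw [← Finset.sum_mul, hμ1, one_mul]
        _ ≤ ∑ h, μ h * fmax (gbBlockCond p n α β h) :=
            Finset.sum_le_sum fun h _ =>
              mul_le_mul_of_nonneg_left
                (le_trans (hlbtrue n h) (le_fmax _ (fun _ => true))) (hμ0 h)
    · intro n
      calc (∑ h, μ h * fmax (gbBlockCond p n α β h))
          ≤ ∑ h, μ h * M ^ (n+1) :=
            Finset.sum_le_sum fun h _ =>
              mul_le_mul_of_nonneg_left (fmax_le (hub n h)) (hμ0 h)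
        _ = M ^ (n+1) := by rw [← Finset.sum_mul, hμ1, one_mul]
  · -- worst-case min-entropy
    apply squeeze_logb M K hM0 hK0
    · intro n
      refine le_trans ?_ (le_fmax _ ((fun _ => true), (fun _ => true)))
      exact hlbtrue n (fun _ => true)
    · intro n
      exact fmax_le fun hb => hub n hb.1 hb.2
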